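/- arXiv:1401.7091 — 2 statements merged into one kernel-verified Lean document; each statement's English description precedes it below -/
import Mathlib

section
/- Let 2 ≤ g ≤ n−1, let C'_{n,g} = C_{n,g} − {(u_n,u_1)} + {(u_n,u_g)}, and let x = (x_1,…,x_n)^T be the unique positive unit eigenvector of Q(C_{n,g}) corresponding to q(C_{n,g}), with x_i the coordinate at vertex u_i. Then (1) x_{g+1} < x_{g+2} < ⋯ < x_n < x_1 < x_2 < ⋯ < x_g, and (2) q(C'_{n,g}) > q(C_{n,g}). -/
/-! Along the path arcs the eigen-equations read `x_{i+1} = (q - 1) x_i`, and the equation at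
`u_g` forces `q > 2`; this gives the ordering. Moving the arc `u_n → u_1` to `u_n → u_g` raises
only row `u_n` of `Q x`, by `x_g - x_1 > 0`. A small geometric perturbation of `x` makes every row
strictly larger than `q` times the vector, and the Collatz–Wielandt bound, proved through
Gelfand's formula, then gives `q(C_{n,g}) < q(C'_{n,g})`. -/

open Matrix

namespace SignlessDigraph

variable {n : ℕ}

/-- Real adjacency matrix of a (multi)digraph on `Fin n`, given by arc multiplicities. -/
def adjMat (W : Fin n → Fin n → ℕ) : Matrix (Fin n) (Fin n) ℝ :=
  fun i j => (W i j : ℝ)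

/-- Outdegree of a vertex. -/
def outdeg (W : Fin n → Fin n → ℕ) (i : Fin n) : ℕ := ∑ j, W i j

/-- Indegree of a vertex. -/
def indeg (W : Fin n → Fin n → ℕ) (i : Fin n) : ℕ := ∑ j, W j i

/-- The signless Laplacian matrix `Q(D) = diag(outdegrees) + A(D)`. -/
noncomputable def Qmat (W : Fin n → Fin n → ℕ) : Matrix (Fin n) (Fin n) ℝ :=
  Matrix.diagonal (fun i => (outdeg W i : ℝ)) + adjMat W

/-- Spectral radius of a real matrix: the maximum modulus of its (complex) eigenvalues. -/
noncomputable def radius (M : Matrix (Fin n) (Fin n) ℝ) : ℝ :=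
  sSup {r : ℝ | ∃ μ ∈ spectrum ℂ (M.map ((↑) : ℝ → ℂ)), r = ‖μ‖}

/-- The signless Laplacian spectral radius `q(D)`. -/
noncomputable def q (W : Fin n → Fin n → ℕ) : ℝ := radius (Qmat W)

/-- The (adjacency) spectral radius `ρ(D)`. -/
noncomputable def rho (W : Fin n → Fin n → ℕ) : ℝ := radius (adjMat W)

/-- A digraph is simple: no loops and no multiple arcs. -/
def Simple (W : Fin n → Fin n → ℕ) : Prop :=
  (∀ i, W i i = 0) ∧ ∀ i j, W i j ≤ 1

/-- Strong connectivity: every vertex is reachable from every vertex by a directed path. -/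
def StronglyConnected (W : Fin n → Fin n → ℕ) : Prop :=
  ∀ i j : Fin n, Relation.ReflTransGen (fun a b => W a b ≠ 0) i j

/-- Isomorphism of digraphs on `Fin n`. -/
def Iso (W W' : Fin n → Fin n → ℕ) : Prop :=
  ∃ e : Fin n ≃ Fin n, ∀ i j, W (e i) (e j) = W' i j

/-- The clique number: maximum size of a set of vertices with all arcs in both directions. -/
noncomputable def cliqueNum (W : Fin n → Fin n → ℕ) : ℕ :=
  sSup {d : ℕ | ∃ s : Finset (Fin n), s.card = d ∧ ∀ i ∈ s, ∀ j ∈ s, i ≠ j → W i j ≠ 0}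

/-- `W` has a directed cycle of length `c`. -/
def HasCycleLen (W : Fin n → Fin n → ℕ) (c : ℕ) : Prop :=
  ∃ (hc : 2 ≤ c) (p : Fin c → Fin n), Function.Injective p ∧
    ∀ i : Fin c, W (p i) (p ⟨((i : ℕ) + 1) % c, Nat.mod_lt _ (by omega)⟩) ≠ 0

/-- The girth: length of a shortest directed cycle. -/
noncomputable def girth (W : Fin n → Fin n → ℕ) : ℕ := sInf {c | HasCycleLen W c}

/-- The complete digraph `K_n^↔`. -/
def Kcomp (n : ℕ) : Fin n → Fin n → ℕ := fun i j => if i = j then 0 else 1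

/-- The directed cycle `C_n^→`, with arcs `i → i+1 (mod n)`. -/
def cyc (n : ℕ) : Fin n → Fin n → ℕ := fun i j => if (j : ℕ) = ((i : ℕ) + 1) % n then 1 else 0

/-- The digraph `B_{n,d}` (for `2 ≤ d ≤ n-1`): a complete digraph on the vertices
`0, …, d-1` together with a directed path `0 → d → d+1 → ⋯ → n-1 → 1`
(the path `u_1 u_2 ⋯ u_{n-d+2}` with `u_1 = 0`, `u_{n-d+2} = 1`,
and internal vertices `d, …, n-1`). -/
def B (n d : ℕ) : Fin n → Fin n → ℕ := fun i j =>
  if i ≠ j ∧ (i : ℕ) < d ∧ (j : ℕ) < d then 1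
  else if (i : ℕ) = 0 ∧ (j : ℕ) = d then 1
  else if d ≤ (i : ℕ) ∧ (j : ℕ) = (i : ℕ) + 1 then 1
  else if (i : ℕ) = n - 1 ∧ (j : ℕ) = 1 then 1
  else 0

/-- `B'_{n,d} = B_{n,d} − (u_{n-d+1}, u_{n-d+2}) + (u_{n-d+1}, u_1)`, i.e. the arc
`n-1 → 1` is replaced by the arc `n-1 → 0`. -/
def B' (n d : ℕ) : Fin n → Fin n → ℕ := fun i j =>
  if (i : ℕ) = n - 1 ∧ (j : ℕ) = 1 then 0
  else if (i : ℕ) = n - 1 ∧ (j : ℕ) = 0 then 1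
  else B n d i j

/-- The digraph `C_{n,g}` (for `2 ≤ g ≤ n-1`): vertices `u_1, …, u_n` are `0, …, n-1`,
with arcs `i → i+1` for `0 ≤ i ≤ n-2` together with the arcs `g-1 → 0` and `n-1 → 0`. -/
def Cng (n g : ℕ) : Fin n → Fin n → ℕ := fun i j =>
  if (j : ℕ) = (i : ℕ) + 1 then 1
  else if ((i : ℕ) = g - 1 ∨ (i : ℕ) = n - 1) ∧ (j : ℕ) = 0 then 1
  else 0

/-- `C'_{n,g} = C_{n,g} − (u_n, u_1) + (u_n, u_g)`, i.e. the arc `n-1 → 0` is replaced by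
the arc `n-1 → g-1`. -/
def Cng' (n g : ℕ) : Fin n → Fin n → ℕ := fun i j =>
  if (i : ℕ) = n - 1 ∧ (j : ℕ) = 0 then 0
  else if (i : ℕ) = n - 1 ∧ (j : ℕ) = g - 1 then 1
  else Cng n g i j

/-- The θ-digraph `θ(a,b,c)` realized on `Fin n` (intended for `n = a + b + c + 2`):
vertex `0` is the common initial vertex of the paths `P_{a+2}`, `P_{b+2}` and terminal
vertex of `P_{c+2}`; vertex `1` is the common terminal vertex of `P_{a+2}`, `P_{b+2}`
and initial vertex of `P_{c+2}`; the internal vertices of the three paths are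
`2, …, a+1`, `a+2, …, a+b+1` and `a+b+2, …, a+b+c+1` respectively. -/
def theta (n a b c : ℕ) : Fin n → Fin n → ℕ := fun i j =>
  if ((a = 0 ∧ (i : ℕ) = 0 ∧ (j : ℕ) = 1) ∨
      (a ≠ 0 ∧ (((i : ℕ) = 0 ∧ (j : ℕ) = 2) ∨
        (2 ≤ (i : ℕ) ∧ (i : ℕ) ≤ a ∧ (j : ℕ) = (i : ℕ) + 1) ∨
        ((i : ℕ) = a + 1 ∧ (j : ℕ) = 1))) ∨
      (b = 0 ∧ (i : ℕ) = 0 ∧ (j : ℕ) = 1) ∨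
      (b ≠ 0 ∧ (((i : ℕ) = 0 ∧ (j : ℕ) = a + 2) ∨
        (a + 2 ≤ (i : ℕ) ∧ (i : ℕ) ≤ a + b ∧ (j : ℕ) = (i : ℕ) + 1) ∨
        ((i : ℕ) = a + b + 1 ∧ (j : ℕ) = 1))) ∨
      (c = 0 ∧ (i : ℕ) = 1 ∧ (j : ℕ) = 0) ∨
      (c ≠ 0 ∧ (((i : ℕ) = 1 ∧ (j : ℕ) = a + b + 2) ∨
        (a + b + 2 ≤ (i : ℕ) ∧ (i : ℕ) ≤ a + b + c ∧ (j : ℕ) = (i : ℕ) + 1) ∨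
        ((i : ℕ) = a + b + c + 1 ∧ (j : ℕ) = 0))))
  then 1 else 0

/-- The digraph `K→(n,k,m)`: the vertex set is partitioned into
`V₁ = {0,…,m-1}`, `S = {m,…,m+k-1}`, `V₂ = {m+k,…,n-1}`; it is the complete digraph
with all arcs from `V₂` to `V₁` removed. -/
def Kdir (n k m : ℕ) : Fin n → Fin n → ℕ := fun i j =>
  if i = j then 0
  else if m + k ≤ (i : ℕ) ∧ (j : ℕ) < m then 0
  else 1

/-- The digraph `D_{uv}` obtained from `D` by deleting the arc `(u,v)`, identifying `u`
with `v` (the merged vertex is `v`; the vertex `u` becomes isolated) and deleting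
multiple arcs (and loops). -/
def contract (W : Fin n → Fin n → ℕ) (u v : Fin n) : Fin n → Fin n → ℕ :=
  fun i j =>
    if i = u ∨ j = u ∨ i = j then 0
    else if i = v then min 1 (W v j + W u j)
    else if j = v then min 1 (W i v + W i u)
    else min 1 (W i j)

/-- The digraph `D^w` obtained from `D` by subdividing the arc `(u,v)` with a new
vertex `w` (realized as the last vertex of `Fin (n+1)`). -/
def subdivide (W : Fin n → Fin n → ℕ) (u v : Fin n) : Fin (n + 1) → Fin (n + 1) → ℕ :=
  fun i j =>
    if hi : (i : ℕ) < n then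
      if hj : (j : ℕ) < n then
        if (⟨(i : ℕ), hi⟩ : Fin n) = u ∧ (⟨(j : ℕ), hj⟩ : Fin n) = v then 0
        else W ⟨(i : ℕ), hi⟩ ⟨(j : ℕ), hj⟩
      else if (⟨(i : ℕ), hi⟩ : Fin n) = u then 1 else 0
    else
      if hj : (j : ℕ) < n then (if (⟨(j : ℕ), hj⟩ : Fin n) = v then 1 else 0)
      else 0

open Filter Topology
open scoped ENNReal

section SignlessLaplacian

variable (W : Fin n → Fin n → ℕ) (x : Fin n → ℝ)

theorem Qmat_mulVec_apply (i : Fin n) : (Qmat W *ᵥ x) i = ∑ j, (W i j : ℝ) * (x i + x j) := by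
  rw [Qmat, add_mulVec, Pi.add_apply, mulVec_diagonal]
  simp only [outdeg, adjMat, mulVec, dotProduct, mul_add, Finset.sum_add_distrib, Nat.cast_sum,
    Finset.sum_mul]

theorem Qmat_nonneg (i j : Fin n) : 0 ≤ Qmat W i j := by
  rw [Qmat, Matrix.add_apply, diagonal_apply]
  exact add_nonneg (by split_ifs <;> positivity) (Nat.cast_nonneg _)

theorem Qmat_mulVec_apply_congr {W' : Fin n → Fin n → ℕ} {i : Fin n} (h : W i = W' i) :
    (Qmat W *ᵥ x) i = (Qmat W' *ᵥ x) i := by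
  simp only [Qmat_mulVec_apply, h]

theorem Qmat_mulVec_apply_of_single {i a : Fin n} (h : ∀ j, W i j = if j = a then 1 else 0) :
    (Qmat W *ᵥ x) i = x i + x a := by
  simp [Qmat_mulVec_apply, h]

theorem Qmat_mulVec_apply_of_pair {i a b : Fin n}
    (h : ∀ j, W i j = (if j = a then 1 else 0) + (if j = b then 1 else 0)) :
    (Qmat W *ᵥ x) i = (x i + x a) + (x i + x b) := by
  simp [Qmat_mulVec_apply, h, add_mul, Finset.sum_add_distrib]

end SignlessLaplacian

section CngRows

variable {g : ℕ} (y : Fin n → ℝ)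

theorem Qmat_Cng_mulVec_apply_of_ne (i : ℕ) (h1 : i ≠ g - 1) (h2 : i + 1 < n) :
    (Qmat (Cng n g) *ᵥ y) ⟨i, by omega⟩ = y ⟨i, by omega⟩ + y ⟨i + 1, h2⟩ :=
  Qmat_mulVec_apply_of_single _ _ fun j => by
    have := j.isLt; simp only [Cng, Fin.ext_iff]; split_ifs <;> omega

theorem Qmat_Cng_mulVec_apply_pred (hg : 0 < g) (hgn : g < n) :
    (Qmat (Cng n g) *ᵥ y) ⟨g - 1, by omega⟩ =
      (y ⟨g - 1, by omega⟩ + y ⟨g, by omega⟩) + (y ⟨g - 1, by omega⟩ + y ⟨0, by omega⟩) :=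
  Qmat_mulVec_apply_of_pair _ _ fun j => by
    have := j.isLt; simp only [Cng, Fin.ext_iff, true_or, true_and]; split_ifs <;> omega

theorem Qmat_Cng_mulVec_apply_last (hn : 0 < n) :
    (Qmat (Cng n g) *ᵥ y) ⟨n - 1, by omega⟩ = y ⟨n - 1, by omega⟩ + y ⟨0, by omega⟩ :=
  Qmat_mulVec_apply_of_single _ _ fun j => by
    have := j.isLt; simp only [Cng, Fin.ext_iff, or_true, true_and]; split_ifs <;> omega

theorem Qmat_Cng'_mulVec_apply_last (hg : 2 ≤ g) (hgn : g ≤ n) :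
    (Qmat (Cng' n g) *ᵥ y) ⟨n - 1, by omega⟩ = y ⟨n - 1, by omega⟩ + y ⟨g - 1, by omega⟩ :=
  Qmat_mulVec_apply_of_single _ _ fun j => by
    have := j.isLt; simp only [Cng', Cng, Fin.ext_iff, or_true, true_and]; split_ifs <;> omega

theorem Qmat_Cng'_mulVec_apply_of_ne_last {i : Fin n} (hi : (i : ℕ) ≠ n - 1) :
    (Qmat (Cng' n g) *ᵥ y) i = (Qmat (Cng n g) *ᵥ y) i :=
  Qmat_mulVec_apply_congr _ y (funext fun j => by simp [Cng', hi])

end CngRows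

section CollatzWielandt

variable {ι : Type*} [Fintype ι] {M : Matrix ι ι ℝ}

theorem mulVec_le_mulVec_of_nonneg (hM : ∀ i j, 0 ≤ M i j) {v w : ι → ℝ} (hvw : v ≤ w) :
    M *ᵥ v ≤ M *ᵥ w := fun i =>
  Finset.sum_le_sum fun j _ => mul_le_mul_of_nonneg_left (hvw j) (hM i j)

theorem pow_smul_le_pow_mulVec [DecidableEq ι] (hM : ∀ i j, 0 ≤ M i j) {z : ι → ℝ} {r : ℝ}
    (hr : 0 ≤ r) (h : r • z ≤ M *ᵥ z) (k : ℕ) : r ^ k • z ≤ (M ^ k) *ᵥ z := by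
  induction k with
  | zero => simp
  | succ k ih =>
    calc r ^ (k + 1) • z = r ^ k • r • z := by rw [pow_succ, mul_smul]
      _ ≤ r ^ k • (M *ᵥ z) := smul_le_smul_of_nonneg_left h (pow_nonneg hr k)
      _ = M *ᵥ (r ^ k • z) := (mulVec_smul M (r ^ k) z).symm
      _ ≤ M *ᵥ ((M ^ k) *ᵥ z) := mulVec_le_mulVec_of_nonneg hM ih
      _ = (M ^ (k + 1)) *ᵥ z := by rw [mulVec_mulVec, pow_succ']

end CollatzWielandt

section SpectralRadius

attribute [local instance] Matrix.linftyOpNormedRing Matrix.linftyOpNormedAlgebra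

theorem ofReal_le_spectralRadius_of_mul_pow_le_norm_pow {A : Type*} [NormedRing A]
    [NormedAlgebra ℂ A] [CompleteSpace A] (a : A) {C r : ℝ} (hC : 0 < C) (hr : 0 ≤ r)
    (h : ∀ k : ℕ, C * r ^ k ≤ ‖a ^ k‖) : ENNReal.ofReal r ≤ spectralRadius ℂ a := by
  have hlim : Tendsto (fun k : ℕ => ENNReal.ofReal (C ^ (1 / (k : ℝ)) * r)) atTop
      (𝓝 (ENNReal.ofReal r)) := by
    have hC1 : Tendsto (fun k : ℕ => C ^ (1 / (k : ℝ))) atTop (𝓝 1) := by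
      simpa [Function.comp_def] using (Real.continuousAt_const_rpow hC.ne').tendsto.comp
        tendsto_one_div_atTop_nhds_zero_nat
    simpa using ENNReal.tendsto_ofReal (hC1.mul_const r)
  refine le_of_tendsto_of_tendsto hlim
    (spectrum.pow_nnnorm_pow_one_div_tendsto_nhds_spectralRadius a) ?_
  filter_upwards [eventually_ne_atTop 0] with k hk
  calc ENNReal.ofReal (C ^ (1 / (k : ℝ)) * r) = ENNReal.ofReal ((C * r ^ k) ^ (1 / (k : ℝ))) := by
        rw [Real.mul_rpow hC.le (pow_nonneg hr k), one_div, Real.pow_rpow_inv_natCast hr hk]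
    _ ≤ ENNReal.ofReal (‖a ^ k‖ ^ (1 / (k : ℝ))) :=
        ENNReal.ofReal_le_ofReal (Real.rpow_le_rpow (by positivity) (h k) (by positivity))
    _ = (‖a ^ k‖₊ : ℝ≥0∞) ^ (1 / (k : ℝ)) := by
        rw [← ENNReal.ofReal_rpow_of_nonneg (norm_nonneg _) (by positivity), ofReal_norm]
        rfl

theorem le_radius_of_ofReal_le_spectralRadius [NeZero n] (M : Matrix (Fin n) (Fin n) ℝ) {r : ℝ}
    (h : ENNReal.ofReal r ≤ spectralRadius ℂ (M.map ((↑) : ℝ → ℂ))) : r ≤ radius M := by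
  obtain ⟨μ, hμ, hμr⟩ := spectrum.exists_nnnorm_eq_spectralRadius_of_nonempty
    (spectrum.nonempty (M.map ((↑) : ℝ → ℂ)))
  have hbdd : BddAbove {s : ℝ | ∃ ν ∈ spectrum ℂ (M.map ((↑) : ℝ → ℂ)), s = ‖ν‖} :=
    ⟨‖M.map ((↑) : ℝ → ℂ)‖, by rintro s ⟨ν, hν, rfl⟩; exact spectrum.norm_le_norm_of_mem hν⟩
  refine le_trans ?_ (le_csSup hbdd ⟨μ, hμ, rfl⟩)
  rw [← hμr, ← enorm_eq_nnnorm, ← ofReal_norm] at h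
  exact (ENNReal.ofReal_le_ofReal_iff (norm_nonneg μ)).mp h

theorem le_radius_of_smul_le_mulVec [NeZero n] {M : Matrix (Fin n) (Fin n) ℝ}
    (hM : ∀ i j, 0 ≤ M i j) {z : Fin n → ℝ} (hz : ∀ i, 0 < z i) {r : ℝ} (hr : 0 ≤ r)
    (h : r • z ≤ M *ᵥ z) : r ≤ radius M := by
  set A := M.map ((↑) : ℝ → ℂ)
  set w : Fin n → ℂ := fun i => z i
  have hw : 0 < ‖w‖ :=
    (by simpa [w] using (hz 0).ne' : 0 < ‖w 0‖).trans_le (norm_le_pi_norm w 0)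
  refine le_radius_of_ofReal_le_spectralRadius M
    (ofReal_le_spectralRadius_of_mul_pow_le_norm_pow A (div_pos (hz 0) hw) hr fun k => ?_)
  have hAk : (A ^ k *ᵥ w) 0 = ((M ^ k *ᵥ z) 0 : ℂ) := by
    have := RingHom.map_mulVec Complex.ofRealHom (M ^ k) z 0
    rw [Matrix.map_pow] at this
    exact this.symm
  calc z 0 / ‖w‖ * r ^ k = r ^ k * z 0 / ‖w‖ := by ring
    _ ≤ ‖(A ^ k *ᵥ w) 0‖ / ‖w‖ := by
        gcongr
        rw [hAk, Complex.norm_real, Real.norm_eq_abs]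
        exact (pow_smul_le_pow_mulVec hM hr h k 0).trans (le_abs_self _)
    _ ≤ ‖A ^ k *ᵥ w‖ / ‖w‖ := by gcongr; exact norm_le_pi_norm _ 0
    _ ≤ ‖A ^ k‖ := div_le_of_le_mul₀ (norm_nonneg _) (norm_nonneg _) (linfty_opNorm_mulVec _ _)

theorem lt_radius_of_mul_lt_mulVec [NeZero n] {M : Matrix (Fin n) (Fin n) ℝ}
    (hM : ∀ i j, 0 ≤ M i j) {z : Fin n → ℝ} (hz : ∀ i, 0 < z i) {r : ℝ} (hr : 0 ≤ r)
    (h : ∀ i, r * z i < (M *ᵥ z) i) : r < radius M := by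
  have hev : ∀ᶠ δ in 𝓝[>] (0 : ℝ), ∀ i, (r + δ) * z i < (M *ᵥ z) i :=
    nhdsWithin_le_nhds <| eventually_all.2 fun i =>
      ((continuous_const.add continuous_id).mul continuous_const).continuousAt.eventually_lt
        continuousAt_const (by simpa using h i)
  obtain ⟨δ, hδz, hδ⟩ := (hev.and self_mem_nhdsWithin).exists
  exact (lt_add_of_pos_right r hδ).trans_le
    (le_radius_of_smul_le_mulVec hM hz (add_pos_of_nonneg_of_pos hr hδ).le fun i => (hδz i).le)

end SpectralRadius

section CngEigenvector

variable {g : ℕ} {x : Fin n → ℝ} {Q : ℝ}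

theorem Cng_eigenvalue_two_lt (hg : 0 < g) (hgn : g < n) (hx : ∀ i, 0 < x i)
    (hxeig : Qmat (Cng n g) *ᵥ x = Q • x) : 2 < Q := by
  have hpred := Qmat_Cng_mulVec_apply_pred x hg hgn
  rw [hxeig, Pi.smul_apply, smul_eq_mul] at hpred
  nlinarith [hx ⟨g - 1, by omega⟩, hx ⟨g, by omega⟩, hx ⟨0, by omega⟩]

theorem Cng_eigenvector_lt_succ (hg : 0 < g) (hgn : g < n) (hx : ∀ i, 0 < x i)
    (hxeig : Qmat (Cng n g) *ᵥ x = Q • x) (i : ℕ) (h1 : i ≠ g - 1) (h2 : i + 1 < n) :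
    x ⟨i, by omega⟩ < x ⟨i + 1, h2⟩ := by
  have hrow := Qmat_Cng_mulVec_apply_of_ne x i h1 h2
  rw [hxeig, Pi.smul_apply, smul_eq_mul] at hrow
  nlinarith [hx ⟨i, by omega⟩, Cng_eigenvalue_two_lt hg hgn hx hxeig]

theorem Cng_eigenvector_last_lt_zero (hg : 0 < g) (hgn : g < n) (hx : ∀ i, 0 < x i)
    (hxeig : Qmat (Cng n g) *ᵥ x = Q • x) : x ⟨n - 1, by omega⟩ < x ⟨0, by omega⟩ := by
  have hlast := Qmat_Cng_mulVec_apply_last (g := g) x (by omega)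
  rw [hxeig, Pi.smul_apply, smul_eq_mul] at hlast
  nlinarith [hx ⟨n - 1, by omega⟩, Cng_eigenvalue_two_lt hg hgn hx hxeig]

theorem Cng_eigenvector_zero_lt_pred (hg : 2 ≤ g) (hgn : g < n) (hx : ∀ i, 0 < x i)
    (hxeig : Qmat (Cng n g) *ᵥ x = Q • x) : x ⟨0, by omega⟩ < x ⟨g - 1, by omega⟩ := by
  have hg₀ : 0 < g := by omega
  have key : ∀ m, 1 ≤ m → ∀ _ : m ≤ g - 1, x ⟨0, by omega⟩ < x ⟨m, by omega⟩ := by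
    intro m hm
    induction m, hm using Nat.le_induction with
    | base => exact fun _ => Cng_eigenvector_lt_succ hg₀ hgn hx hxeig 0 (by omega) (by omega)
    | succ m _ ih => exact fun _ =>
        (ih (by omega)).trans (Cng_eigenvector_lt_succ hg₀ hgn hx hxeig m (by omega) (by omega))
  exact key (g - 1) (by omega) le_rfl

theorem Cng_eigenvalue_lt_q_Cng' (hg : 2 ≤ g) (hgn : g < n) (hx : ∀ i, 0 < x i)
    (hxeig : Qmat (Cng n g) *ᵥ x = Q • x) : Q < q (Cng' n g) := by
  have hQ : 0 < Q := by linarith [Cng_eigenvalue_two_lt (by omega) hgn hx hxeig]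
  have heig (i : Fin n) : (Qmat (Cng n g) *ᵥ x) i = Q * x i := by rw [hxeig]; rfl
  set ε := (x ⟨g - 1, by omega⟩ - x ⟨0, by omega⟩) / Q ^ n
  have hε : 0 < ε :=
    div_pos (sub_pos.2 (Cng_eigenvector_zero_lt_pred hg hgn hx hxeig)) (pow_pos hQ n)
  have hεQ : ε * Q ^ n = x ⟨g - 1, by omega⟩ - x ⟨0, by omega⟩ :=
    div_mul_cancel₀ _ (pow_pos hQ n).ne'
  -- `ε Q ^ j` makes every row of `Q(C_{n,g})` strict, while `ε Q ^ n` is exactly the gain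
  -- `x_{g-1} - x_0` in the only row (`n - 1`) where `Q(C'_{n,g}) x` exceeds `Q x`.
  set z : Fin n → ℝ := fun j => x j + ε * Q ^ (j : ℕ)
  have : NeZero n := ⟨by omega⟩
  refine lt_radius_of_mul_lt_mulVec (z := z) (Qmat_nonneg _)
    (fun j => add_pos (hx j) (by positivity)) hQ.le ?_
  rintro ⟨i, hi⟩
  rcases (show i = n - 1 ∨ i = g - 1 ∨ (i ≠ g - 1 ∧ i + 1 < n) by omega) with rfl | rfl | ⟨h1, h2⟩
  · have hlast := heig ⟨n - 1, hi⟩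
    rw [Qmat_Cng_mulVec_apply_last (g := g) x (by omega)] at hlast
    rw [Qmat_Cng'_mulVec_apply_last z hg hgn.le]
    have hpow : Q * (ε * Q ^ (n - 1)) = ε * Q ^ n := by
      rw [← pow_sub_one_mul (by omega : n ≠ 0) Q]; ring
    simp only [z]
    linarith [mul_pos hε (pow_pos hQ (n - 1)), mul_pos hε (pow_pos hQ (g - 1))]
  · have hpred := heig ⟨g - 1, hi⟩
    rw [Qmat_Cng_mulVec_apply_pred x (by omega) hgn] at hpred
    rw [Qmat_Cng'_mulVec_apply_of_ne_last z (show g - 1 ≠ n - 1 by omega),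
      Qmat_Cng_mulVec_apply_pred z (by omega) hgn]
    have hpow : Q * (ε * Q ^ (g - 1)) = ε * Q ^ g := by
      rw [← pow_sub_one_mul (by omega : g ≠ 0) Q]; ring
    simp only [z]
    linarith [mul_pos hε (pow_pos hQ (g - 1)), mul_pos hε (pow_pos hQ 0)]
  · have hrow := heig ⟨i, hi⟩
    rw [Qmat_Cng_mulVec_apply_of_ne x i h1 h2] at hrow
    rw [Qmat_Cng'_mulVec_apply_of_ne_last z (show i ≠ n - 1 by omega),
      Qmat_Cng_mulVec_apply_of_ne z i h1 h2]
    have hpow : Q * (ε * Q ^ i) = ε * Q ^ (i + 1) := by ring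
    simp only [z]
    linarith [mul_pos hε (pow_pos hQ i)]

end CngEigenvector

/-- For `2 ≤ g ≤ n-1`, with `x` the positive unit eigenvector of
`Q(C_{n,g})` corresponding to `q(C_{n,g})` (the paper's vertex `u_j` is the index `j-1`):
(1) `x_{u_{g+1}} < x_{u_{g+2}} < ⋯ < x_{u_n} < x_{u_1} < x_{u_2} < ⋯ < x_{u_g}`, and
(2) `q(C'_{n,g}) > q(C_{n,g})`. -/
theorem eigenvector_Cng_and_q_Cng' {n g : ℕ} (hg : 2 ≤ g) (hgn : g ≤ n - 1)
    (x : Fin n → ℝ) (hxpos : ∀ i, 0 < x i)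
    (hxeig : Qmat (Cng n g) *ᵥ x = q (Cng n g) • x) :
    ((∀ i : ℕ, ∀ _h1 : g ≤ i, ∀ _h2 : i + 1 ≤ n - 1,
        x ⟨i, by omega⟩ < x ⟨i + 1, by omega⟩) ∧
      x ⟨n - 1, by omega⟩ < x ⟨0, by omega⟩ ∧
      (∀ i : ℕ, ∀ _h : i + 1 ≤ g - 1, x ⟨i, by omega⟩ < x ⟨i + 1, by omega⟩)) ∧
    q (Cng n g) < q (Cng' n g) := by
  have hg₀ : 0 < g := by omega
  have hgn' : g < n := by omega
  refine ⟨⟨fun i _ _ => ?_, Cng_eigenvector_last_lt_zero hg₀ hgn' hxpos hxeig, fun i _ => ?_⟩,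
    Cng_eigenvalue_lt_q_Cng' hg hgn' hxpos hxeig⟩ <;>
  exact Cng_eigenvector_lt_succ hg₀ hgn' hxpos hxeig i (by omega) (by omega)

end SignlessDigraph
end

section
/- Let n ≥ 4. Then 2 = q(C_n^→) < q(C_{n,n−1}) < q(C_{n,n−2}) < ⋯ < q(C_{n,2}) < 3; that is, q(C_{n,g+1}) < q(C_{n,g}) for every g with 2 ≤ g ≤ n−2, q(C_{n,n−1}) > 2, and q(C_{n,2}) < 3. -/
open Matrix

namespace SignlessDigraph

variable {n : ℕ}

/-!
For a loopless digraph whose outdegrees all equal `d`, Gershgorin's theorem gives `|μ| ≤ 2d`,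
and the all-ones vector is an eigenvector for `2d`; this gives `q(C_n^→) = 2`.

For `C_{n,g}` write `t = μ - 1`. Along every arc `u_k → u_{k+1}` other than the one leaving `u_g`,
an eigenvector for `μ` gets multiplied by `t`; closing up the two cycles shows that `μ` is an
eigenvalue iff `t ^ n = t ^ (n - 1) + t ^ (n - g) + 1`, i.e. iff `z + z ^ g + z ^ n = 1` for
`z = 1 / t`. As `x ↦ x + x ^ g + x ^ n` is strictly increasing on `[0, ∞)`, the triangle inequality
shows `|z| ≥ u` for the real root `u ∈ (1/2, 1)`, so `q(C_{n,g}) = 1 + 1 / u ∈ (2, 3)`. Finally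
`u` increases with `g`, because `x ^ (g + 1) < x ^ g` on `(0, 1)`.
-/

open Finset

lemma mem_spectrum_iff_exists_mulVec_eq_smul {ι : Type*} [Fintype ι] [DecidableEq ι]
    (A : Matrix ι ι ℂ) (μ : ℂ) : μ ∈ spectrum ℂ A ↔ ∃ v ≠ 0, A *ᵥ v = μ • v := by
  rw [← spectrum_toLin', ← Module.End.hasEigenvalue_iff_mem_spectrum]
  constructor
  · intro h
    obtain ⟨v, hv⟩ := h.exists_hasEigenvector
    exact ⟨v, hv.2, Module.End.mem_eigenspace_iff.mp hv.1⟩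
  · rintro ⟨v, hv, hAv⟩
    exact Module.End.hasEigenvalue_of_hasEigenvector ⟨Module.End.mem_eigenspace_iff.mpr hAv, hv⟩

lemma radius_eq_norm_of_forall_norm_le {M : Matrix (Fin n) (Fin n) ℝ} {μ₀ : ℂ}
    (hμ₀ : μ₀ ∈ spectrum ℂ (M.map ((↑) : ℝ → ℂ)))
    (hle : ∀ μ ∈ spectrum ℂ (M.map ((↑) : ℝ → ℂ)), ‖μ‖ ≤ ‖μ₀‖) :
    radius M = ‖μ₀‖ :=
  IsGreatest.csSup_eq ⟨⟨μ₀, hμ₀, rfl⟩, by rintro _ ⟨μ, hμ, rfl⟩; exact hle μ hμ⟩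

lemma Qmat_map_apply (W : Fin n → Fin n → ℕ) (i j : Fin n) :
    (Qmat W).map ((↑) : ℝ → ℂ) i j = (if i = j then (outdeg W i : ℂ) else 0) + W i j := by
  simp [Qmat, adjMat, Matrix.diagonal_apply, apply_ite ((↑) : ℝ → ℂ)]

lemma Qmat_map_mulVec_apply (W : Fin n → Fin n → ℕ) (v : Fin n → ℂ) (i : Fin n) :
    ((Qmat W).map ((↑) : ℝ → ℂ) *ᵥ v) i = outdeg W i * v i + ∑ j, (W i j : ℂ) * v j := by
  simp only [Matrix.mulVec, dotProduct, Qmat_map_apply, add_mul, sum_add_distrib, ite_mul,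
    zero_mul, sum_ite_eq, mem_univ, if_true]

lemma outdeg_eq_sum (W : Fin n → Fin n → ℕ) (i : Fin n) :
    (outdeg W i : ℂ) = ∑ j, (W i j : ℂ) := by
  simp [outdeg]

lemma q_eq_of_outdeg_eq [NeZero n] {W : Fin n → Fin n → ℕ} (hloop : ∀ i, W i i = 0) {d : ℕ}
    (hd : ∀ i, outdeg W i = d) : q W = 2 * d := by
  have h2d : ‖((2 * d : ℝ) : ℂ)‖ = 2 * d := by
    rw [Complex.norm_real, Real.norm_of_nonneg (by positivity)]
  rw [q, ← h2d]
  apply radius_eq_norm_of_forall_norm_le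
  · rw [mem_spectrum_iff_exists_mulVec_eq_smul]
    refine ⟨1, one_ne_zero, funext fun i => ?_⟩
    simp only [Qmat_map_mulVec_apply, Pi.one_apply, mul_one, Pi.smul_apply, smul_eq_mul,
      ← outdeg_eq_sum, hd]
    push_cast
    ring
  · intro μ hμ
    rw [← spectrum_toLin', ← Module.End.hasEigenvalue_iff_mem_spectrum] at hμ
    obtain ⟨k, hk⟩ := eigenvalue_mem_ball hμ
    have hdiag : (Qmat W).map ((↑) : ℝ → ℂ) k k = d := by
      rw [Qmat_map_apply]; simp [hloop, hd]
    have hrad : ∑ j ∈ univ.erase k, ‖(Qmat W).map ((↑) : ℝ → ℂ) k j‖ = d := by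
      rw [Finset.sum_congr rfl fun j hj => by
        rw [Qmat_map_apply, if_neg (ne_of_mem_erase hj).symm, zero_add, Complex.norm_natCast]]
      rw [Finset.sum_erase_eq_sub (mem_univ k)]
      simp [hloop, ← hd k, outdeg]
    rw [Metric.mem_closedBall, hdiag, hrad, dist_eq_norm] at hk
    calc ‖μ‖ ≤ ‖μ - d‖ + ‖(d : ℂ)‖ := norm_le_norm_sub_add μ _
      _ ≤ 2 * d := by rw [Complex.norm_natCast]; linarith
      _ = _ := h2d.symm

lemma cyc_self (hn : 2 ≤ n) (i : Fin n) : cyc n i i = 0 := by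
  have : (i : ℕ) ≠ ((i : ℕ) + 1) % n := by
    rcases Nat.lt_or_ge ((i : ℕ) + 1) n with h | h
    · rw [Nat.mod_eq_of_lt h]; omega
    · rw [show (i : ℕ) + 1 = n by omega, Nat.mod_self]; omega
  simp [cyc, this]

lemma outdeg_cyc [NeZero n] (i : Fin n) : outdeg (cyc n) i = 1 := by
  have hsucc : ∀ j : Fin n,
      (j : ℕ) = ((i : ℕ) + 1) % n ↔ j = ⟨((i : ℕ) + 1) % n, Nat.mod_lt _ n.pos_of_neZero⟩ :=
    fun j => by simp [Fin.ext_iff]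
  simp [outdeg, cyc, hsucc]

lemma q_cyc (hn : 2 ≤ n) : q (cyc n) = 2 := by
  have : NeZero n := ⟨by omega⟩
  simpa using q_eq_of_outdeg_eq (cyc_self hn) outdeg_cyc

def extendByZero {α : Type*} [Zero α] (v : Fin n → α) (k : ℕ) : α :=
  if h : k < n then v ⟨k, h⟩ else 0

lemma extendByZero_val {α : Type*} [Zero α] (v : Fin n → α) (i : Fin n) :
    extendByZero v i = v i := by
  simp [extendByZero]

lemma sum_ite_val_eq {α : Type*} [AddCommMonoid α] (v : Fin n → α) (m : ℕ) :
    ∑ j : Fin n, (if (j : ℕ) = m then v j else 0) = extendByZero v m := by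
  unfold extendByZero
  split_ifs with h
  · rw [Finset.sum_eq_single ⟨m, h⟩] <;> simp +contextual [Fin.ext_iff]
  · exact Finset.sum_eq_zero fun j _ => if_neg (by omega)

lemma eq_pow_mul_of_forall_succ {M : Type*} [Monoid M] {w : ℕ → M} {t : M} {a b : ℕ}
    (h : ∀ k, a ≤ k → k < b → w (k + 1) = t * w k) {k : ℕ} (hak : a ≤ k) (hkb : k ≤ b) :
    w k = t ^ (k - a) * w a := by
  induction k, hak using Nat.le_induction with
  | base => simp
  | succ k hak ih =>
    rw [h k hak (by omega), ih (by omega), ← mul_assoc, ← pow_succ',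
      Nat.sub_add_comm hak]

section Cng

variable {g : ℕ}

lemma sum_Cng_mul {R : Type*} [NonAssocSemiring R] (v : Fin n → R) (i : Fin n) :
    ∑ j, (Cng n g i j : R) * v j =
      extendByZero v (i + 1) +
        if (i : ℕ) = g - 1 ∨ (i : ℕ) = n - 1 then extendByZero v 0 else 0 := by
  rw [← sum_ite_val_eq, ← sum_ite_val_eq]
  split_ifs with hc
  · rw [← Finset.sum_add_distrib]
    refine Finset.sum_congr rfl fun j _ => ?_
    unfold Cng
    split_ifs <;> simp <;> omega
  · rw [add_zero]
    refine Finset.sum_congr rfl fun j _ => ?_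
    simp only [Cng, hc, false_and, if_false]
    split_ifs <;> simp

lemma outdeg_Cng (hg : 1 ≤ g) (hgn : g < n) (i : Fin n) :
    outdeg (Cng n g) i = if (i : ℕ) = g - 1 then 2 else 1 := by
  have h := sum_Cng_mul (R := ℕ) (g := g) 1 i
  simp only [mul_one, Pi.one_apply, Nat.cast_id] at h
  rw [outdeg, h]
  simp only [extendByZero, Pi.one_apply]
  split_ifs <;> omega

lemma Cng_mulVec_eq_smul_iff (hg : 1 ≤ g) (hgn : g < n) (v : Fin n → ℂ) (μ : ℂ) :
    (Qmat (Cng n g)).map ((↑) : ℝ → ℂ) *ᵥ v = μ • v ↔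
      ∀ k < n, (if k = g - 1 then 2 else 1) * extendByZero v k + extendByZero v (k + 1)
        + (if k = g - 1 ∨ k = n - 1 then extendByZero v 0 else 0) = μ * extendByZero v k := by
  rw [funext_iff, Fin.forall_iff]
  refine forall₂_congr fun k hk => ?_
  have hv : v ⟨k, hk⟩ = extendByZero v k := (extendByZero_val v ⟨k, hk⟩).symm
  rw [Qmat_map_mulVec_apply, sum_Cng_mul, outdeg_Cng hg hgn, Pi.smul_apply, smul_eq_mul, hv,
    ← add_assoc]
  push_cast [apply_ite ((↑) : ℕ → ℂ)]
  rfl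

lemma Cng_charEq_of_mem_spectrum (hg : 2 ≤ g) (hgn : g < n) {μ : ℂ}
    (hμ : μ ∈ spectrum ℂ ((Qmat (Cng n g)).map ((↑) : ℝ → ℂ))) :
    (μ - 1) ^ n = (μ - 1) ^ (n - 1) + (μ - 1) ^ (n - g) + 1 := by
  obtain ⟨v, hv, hμv⟩ := (mem_spectrum_iff_exists_mulVec_eq_smul _ μ).mp hμ
  have hrow := (Cng_mulVec_eq_smul_iff (by omega) hgn v μ).mp hμv
  set w := extendByZero v
  set t := μ - 1
  have hstep : ∀ k, k < n - 1 → k ≠ g - 1 → w (k + 1) = t * w k := fun k hk hkg => by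
    have h := hrow k (by omega)
    rw [if_neg hkg, if_neg (by omega)] at h
    linear_combination h
  have hjump : w g = (t - 1) * w (g - 1) - w 0 := by
    have h := hrow (g - 1) (by omega)
    rw [if_pos rfl, if_pos (Or.inl rfl), Nat.sub_add_cancel (by omega)] at h
    linear_combination h
  have hwrap : w 0 = t * w (n - 1) := by
    have h := hrow (n - 1) (by omega)
    have hwn : w (n - 1 + 1) = 0 := dif_neg (by omega)
    rw [if_neg (by omega), if_pos (Or.inr rfl), hwn] at h
    linear_combination h
  have hhead : ∀ k ≤ g - 1, w k = t ^ k * w 0 := fun k hk =>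
    eq_pow_mul_of_forall_succ (a := 0) (b := g - 1) (fun j _ hj => hstep j (by omega) (by omega))
      (Nat.zero_le k) hk
  have htail : ∀ k, g ≤ k → k ≤ n - 1 → w k = t ^ (k - g) * w g := fun k hgk hk =>
    eq_pow_mul_of_forall_succ (fun j hj _ => hstep j (by omega) (by omega)) hgk hk
  have hw0 : w 0 ≠ 0 := by
    intro h0
    have hg0 : w g = 0 := by rw [hjump, hhead _ le_rfl, h0]; ring
    refine hv (funext fun i => ?_)
    rw [Pi.zero_apply, ← extendByZero_val v i]
    change w i = 0
    rcases le_or_gt (i : ℕ) (g - 1) with hi | hi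
    · rw [hhead _ hi, h0, mul_zero]
    · rw [htail _ (by omega) (by omega), hg0, mul_zero]
  have hpow₁ : t * t ^ (n - 1 - g) = t ^ (n - g) := by rw [← pow_succ']; congr 1; omega
  have hpow₂ : t ^ (n - g) * t ^ (g - 1) = t ^ (n - 1) := by rw [← pow_add]; congr 1; omega
  have hpow₃ : t * t ^ (n - 1) = t ^ n := by rw [← pow_succ']; congr 1; omega
  have hchar : (t ^ n - t ^ (n - 1) - t ^ (n - g) - 1) * w 0 = 0 := by
    rw [htail (n - 1) (by omega) le_rfl, hjump, hhead _ le_rfl] at hwrap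
    linear_combination
      -hwrap - ((t - 1) * t ^ (g - 1) * w 0 - w 0) * hpow₁ - (t - 1) * w 0 * hpow₂ - w 0 * hpow₃
  linear_combination (mul_eq_zero.mp hchar).resolve_right hw0

lemma mem_spectrum_Cng_of_charEq (hg : 2 ≤ g) (hgn : g < n) {μ : ℂ}
    (hμ : (μ - 1) ^ n = (μ - 1) ^ (n - 1) + (μ - 1) ^ (n - g) + 1) :
    μ ∈ spectrum ℂ ((Qmat (Cng n g)).map ((↑) : ℝ → ℂ)) := by
  set t := μ - 1
  -- the eigenvector is `t ^ ((k - g) mod n)` at vertex `k`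
  let f : ℕ → ℂ := fun k => if k < g then t ^ (k + n - g) else t ^ (k - g)
  have hf : ∀ k < n, extendByZero (fun i : Fin n => f i) k = f k := fun k hk => dif_pos hk
  rw [mem_spectrum_iff_exists_mulVec_eq_smul]
  refine ⟨fun i => f i, fun h => ?_, (Cng_mulVec_eq_smul_iff (by omega) hgn _ μ).mpr
    fun k hk => ?_⟩
  · simpa [f] using congrFun h ⟨g, hgn⟩
  rw [hf k hk, hf 0 (by omega), show μ = t + 1 by ring]
  rcases (show k < g - 1 ∨ k = g - 1 ∨ (g ≤ k ∧ k < n - 1) ∨ k = n - 1 by omega)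
    with hk' | rfl | hk' | rfl
  · rw [if_neg (by omega), if_neg (by omega), hf _ (by omega)]
    simp only [f, if_pos (show k < g by omega), if_pos (show k + 1 < g by omega),
      show k + 1 + n - g = (k + n - g) + 1 by omega, pow_succ]
    ring
  · rw [if_pos rfl, if_pos (Or.inl rfl), hf _ (by omega)]
    simp only [f, if_pos (show g - 1 < g by omega), if_pos (show 0 < g by omega), lt_irrefl,
      if_false, Nat.sub_add_cancel (show 1 ≤ g by omega), Nat.sub_self, pow_zero, zero_add,
      show g - 1 + n - g = n - 1 by omega]
    have e : t * t ^ (n - 1) = t ^ n := by rw [← pow_succ']; congr 1; omega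
    linear_combination -hμ - e
  · rw [if_neg (by omega), if_neg (by omega), hf _ (by omega)]
    simp only [f, if_neg (show ¬ k < g by omega), if_neg (show ¬ k + 1 < g by omega),
      show k + 1 - g = (k - g) + 1 by omega, pow_succ]
    ring
  · have hwn : extendByZero (fun i : Fin n => f i) (n - 1 + 1) = 0 := dif_neg (by omega)
    rw [if_neg (by omega), if_pos (Or.inr rfl), hwn]
    simp only [f, if_neg (show ¬ n - 1 < g by omega), if_pos (show 0 < g by omega), zero_add]
    have e : t * t ^ (n - 1 - g) = t ^ (n - g) := by rw [← pow_succ']; congr 1; omega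
    linear_combination -e

lemma mem_spectrum_Cng_iff (hg : 2 ≤ g) (hgn : g < n) (μ : ℂ) :
    μ ∈ spectrum ℂ ((Qmat (Cng n g)).map ((↑) : ℝ → ℂ)) ↔
      (μ - 1) ^ n = (μ - 1) ^ (n - 1) + (μ - 1) ^ (n - g) + 1 :=
  ⟨Cng_charEq_of_mem_spectrum hg hgn, mem_spectrum_Cng_of_charEq hg hgn⟩

lemma pow_eq_pow_sub_one_add_pow_sub_add_one_iff {K : Type*} [Field K] {t : K} (ht : t ≠ 0)
    (hg : g ≤ n) (hn : 1 ≤ n) :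
    t ^ n = t ^ (n - 1) + t ^ (n - g) + 1 ↔ t⁻¹ + t⁻¹ ^ g + t⁻¹ ^ n = 1 := by
  have htn : t ^ n * t⁻¹ ^ n = 1 := by rw [← mul_pow, mul_inv_cancel₀ ht, one_pow]
  rw [pow_sub₀ t ht hn, pow_sub₀ t ht hg, pow_one, ← inv_pow]
  constructor <;> intro h
  · linear_combination -t⁻¹ ^ n * h + (1 - t⁻¹ - t⁻¹ ^ g) * htn
  · linear_combination -t ^ n * h + htn

lemma strictMonoOn_add_pow_add_pow (hg : g ≠ 0) (hn : n ≠ 0) :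
    StrictMonoOn (fun x : ℝ => x + x ^ g + x ^ n) (Set.Ici 0) :=
  (strictMonoOn_id.add (pow_left_strictMonoOn₀ hg)).add (pow_left_strictMonoOn₀ hn)

lemma exists_add_pow_add_pow_eq_one (hg : 2 ≤ g) (hn : 3 ≤ n) :
    ∃ u ∈ Set.Ioo (1 / 2 : ℝ) 1, u + u ^ g + u ^ n = 1 := by
  have hcont : ContinuousOn (fun x : ℝ => x + x ^ g + x ^ n) (Set.Icc (1 / 2) 1) := by
    fun_prop
  have hhalf : (1 / 2 : ℝ) + (1 / 2) ^ g + (1 / 2) ^ n < 1 := by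
    have h2 : (1 / 2 : ℝ) ^ g ≤ (1 / 2) ^ 2 := pow_le_pow_of_le_one (by norm_num) (by norm_num) hg
    have h3 : (1 / 2 : ℝ) ^ n ≤ (1 / 2) ^ 3 := pow_le_pow_of_le_one (by norm_num) (by norm_num) hn
    linarith
  exact intermediate_value_Ioo (by norm_num) hcont ⟨hhalf, by norm_num⟩

lemma le_norm_of_add_pow_add_pow_eq_one (hg : g ≠ 0) (hn : n ≠ 0) {u : ℝ} (hu0 : 0 ≤ u)
    (hu : u + u ^ g + u ^ n = 1) {z : ℂ} (hz : z + z ^ g + z ^ n = 1) : u ≤ ‖z‖ := by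
  have hnorm : u + u ^ g + u ^ n ≤ ‖z‖ + ‖z‖ ^ g + ‖z‖ ^ n := by
    calc u + u ^ g + u ^ n = ‖z + z ^ g + z ^ n‖ := by rw [hz, hu, norm_one]
      _ ≤ ‖z‖ + ‖z‖ ^ g + ‖z‖ ^ n := by
        simpa only [norm_pow] using norm_add₃_le (a := z) (b := z ^ g) (c := z ^ n)
  exact (strictMonoOn_add_pow_add_pow hg hn).le_iff_le hu0 (norm_nonneg z) |>.mp hnorm

lemma q_Cng_eq (hg : 2 ≤ g) (hgn : g < n) {u : ℝ} (hu0 : 0 < u) (hu : u + u ^ g + u ^ n = 1) :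
    q (Cng n g) = 1 + u⁻¹ := by
  have hnorm : ‖((1 + u⁻¹ : ℝ) : ℂ)‖ = 1 + u⁻¹ := by
    rw [Complex.norm_real, Real.norm_of_nonneg (by positivity)]
  rw [q, ← hnorm]
  apply radius_eq_norm_of_forall_norm_le
  · rw [mem_spectrum_Cng_iff hg hgn,
      show ((1 + u⁻¹ : ℝ) : ℂ) - 1 = ((u⁻¹ : ℝ) : ℂ) by push_cast; ring,
      pow_eq_pow_sub_one_add_pow_sub_add_one_iff (by exact_mod_cast (inv_pos.mpr hu0).ne')
        hgn.le (by omega)]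
    simp only [Complex.ofReal_inv, inv_inv]
    exact_mod_cast hu
  · intro μ hμ
    have hchar := (mem_spectrum_Cng_iff hg hgn μ).mp hμ
    have ht : μ - 1 ≠ 0 := by
      intro h
      rw [h, zero_pow (by omega), zero_pow (by omega), zero_pow (by omega)] at hchar
      norm_num at hchar
    have hz := (pow_eq_pow_sub_one_add_pow_sub_add_one_iff ht hgn.le (by omega)).mp hchar
    have hle := le_norm_of_add_pow_add_pow_eq_one (by omega) (by omega) hu0.le hu hz
    rw [norm_inv, le_inv_comm₀ hu0 (norm_pos_iff.mpr ht)] at hle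
    calc ‖μ‖ ≤ ‖μ - 1‖ + ‖(1 : ℂ)‖ := norm_le_norm_sub_add μ 1
      _ ≤ 1 + u⁻¹ := by rw [norm_one]; linarith
      _ = _ := hnorm.symm

lemma q_Cng_mem_Ioo (hg : 2 ≤ g) (hgn : g < n) : q (Cng n g) ∈ Set.Ioo 2 3 := by
  obtain ⟨u, ⟨hu1, hu2⟩, hu⟩ := exists_add_pow_add_pow_eq_one hg (by omega : 3 ≤ n)
  have hu0 : 0 < u := by linarith
  rw [q_Cng_eq hg hgn hu0 hu]
  constructor
  · linarith [one_lt_inv₀ hu0 |>.mpr hu2]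
  · linarith [(inv_lt_comm₀ hu0 (by norm_num)).mpr (by linarith : (2 : ℝ)⁻¹ < u)]

lemma q_Cng_succ_lt (hg : 2 ≤ g) (hgn : g + 1 < n) : q (Cng n (g + 1)) < q (Cng n g) := by
  obtain ⟨u, ⟨hu1, hu2⟩, hu⟩ := exists_add_pow_add_pow_eq_one hg (by omega : 3 ≤ n)
  obtain ⟨u', ⟨hu1', -⟩, hu'⟩ := exists_add_pow_add_pow_eq_one (by omega : 2 ≤ g + 1)
    (by omega : 3 ≤ n)
  have hu0 : 0 < u := by linarith
  have hu0' : 0 < u' := by linarith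
  have hlt : u < u' := by
    refine (strictMonoOn_add_pow_add_pow (g := g + 1) (n := n) (by omega) (by omega)).lt_iff_lt
      hu0.le hu0'.le |>.mp ?_
    have : u ^ (g + 1) < u ^ g := pow_lt_pow_right_of_lt_one₀ hu0 hu2 (Nat.lt_succ_self g)
    linarith
  rw [q_Cng_eq hg (by omega) hu0 hu, q_Cng_eq (by omega) hgn hu0' hu']
  linarith [(inv_lt_inv₀ hu0' hu0).mpr hlt]

end Cng

/-- For `n ≥ 4`:
`2 = q(C_n^→) < q(C_{n,n-1}) < q(C_{n,n-2}) < ⋯ < q(C_{n,2}) < 3`. -/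
theorem q_Cng_chain {n : ℕ} (hn : 4 ≤ n) :
    q (cyc n) = 2 ∧ 2 < q (Cng n (n - 1)) ∧
    (∀ g : ℕ, 2 ≤ g → g ≤ n - 2 → q (Cng n (g + 1)) < q (Cng n g)) ∧
    q (Cng n 2) < 3 :=
  ⟨q_cyc (by omega), (q_Cng_mem_Ioo (by omega) (by omega)).1,
    fun _ hg hgn => q_Cng_succ_lt hg (by omega), (q_Cng_mem_Ioo le_rfl (by omega)).2⟩

end SignlessDigraph
end
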